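/- Let ℓ ≥ 1 and consider the finite automaton M with states Q = {1, 2, …, ℓ}, starting state 1, and transitions Δ(i, 1) := min(i+1, ℓ) and Δ(i, 0) := 1. Let B := {ℓ}, and let μ be the product measure on {0,1}^ω under which the coordinates are independent and uniform on {0,1}. Then for μ-almost every b ∈ {0,1}^ω, the characteristic sequence of V_B(b) is 2^{−ℓ+1}-weakly sparse. -/

import Mathlib

open MeasureTheory

/-- `cars x t` is `N_t(x) = x_1 + ⋯ + x_t` (sequences are 0-indexed: `x i` is `x_{i+1}`). -/
def cars (x : ℕ → Bool) (t : ℕ) : ℕ :=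
  ((Finset.range t).filter (fun i => x i = true)).card

/-- `x` is `ε`-weakly sparse if `lim_{s→∞} inf_{t ≥ s} N_t(x)/t ≤ ε`. -/
def epsWeaklySparse (ε : ℝ) (x : ℕ → Bool) : Prop :=
  Filter.liminf (fun t : ℕ => (cars x t : ℝ) / t) Filter.atTop ≤ ε

/-- The state of the automaton with transition function `Δ` and start state `s`
after reading `t` bits of `b`: `q_0(b) = s`, `q_{t+1}(b) = Δ(q_t(b), b_{t+1})`. -/
def autoRun {Q : Type*} (Δ : Q → Bool → Q) (s : Q) (b : ℕ → Bool) : ℕ → Q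
  | 0 => s
  | t + 1 => Δ (autoRun Δ s b t) (b t)

/-!
With `m = ℓ - 1` and `p = 2⁻ᵐ`, the automaton is in its last state at time `t` exactly when
the `m` bits read before `t` are all ones, so `N_n` counts the times `t < n` ending a run of
at least `m` ones. Under the fair-coin measure each such event has probability `p` (for
`t ≥ m`), and two of them at distance at least `m` concern disjoint bits, so they are
independent. Hence `N_n` has mean at least `(n - m) p` and second moment at most
`(n p)² + 2 m n p`, its variance is at most `4 m n p`, and Chebyshev's inequality gives
`μ (N_n / n ≥ p + δ) = O(1 / n)`. Weak sparsity only concerns the `liminf`, so this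
convergence in probability suffices: for each `δ > 0`, the event that `N_n / n ≥ p + δ` for
all large `n` is null.
-/

open Filter Finset Topology

lemma card_filter_add_le_mul_sq_le {α : Type*} (s : Finset α) (f : α → ℝ) {c d : ℝ}
    (hd : 0 ≤ d) : (#{x ∈ s | c + d ≤ f x} : ℝ) * d ^ 2 ≤ ∑ x ∈ s, (f x - c) ^ 2 := by
  calc (#{x ∈ s | c + d ≤ f x} : ℝ) * d ^ 2 = #{x ∈ s | c + d ≤ f x} • d ^ 2 := by
        rw [nsmul_eq_mul]
    _ ≤ ∑ x ∈ s with c + d ≤ f x, (f x - c) ^ 2 := card_nsmul_le_sum _ _ _ fun x hx =>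
        pow_le_pow_left₀ hd (by linarith [(mem_filter.1 hx).2]) 2
    _ ≤ ∑ x ∈ s, (f x - c) ^ 2 :=
        sum_le_sum_of_subset_of_nonneg (filter_subset _ _) fun _ _ _ => sq_nonneg _

theorem ae_liminf_le_of_tendsto_measure {Ω : Type*} [MeasurableSpace Ω] {μ : Measure Ω}
    {f : ℕ → Ω → ℝ} {c : ℝ} (hbdd : ∀ ω, IsBoundedUnder (· ≥ ·) atTop fun n => f n ω)
    (hf : ∀ δ > 0, Tendsto (fun n => μ {ω | c + δ ≤ f n ω}) atTop (𝓝 0)) :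
    ∀ᵐ ω ∂μ, liminf (fun n => f n ω) atTop ≤ c := by
  have hfreq (δ : ℝ) (hδ : 0 < δ) : ∀ᵐ ω ∂μ, ∃ᶠ n in atTop, f n ω ≤ c + δ := by
    have hnull (T : ℕ) : μ (⋂ n ∈ Set.Ici T, {ω | c + δ ≤ f n ω}) = 0 :=
      le_antisymm (ge_of_tendsto (hf δ hδ) (eventually_atTop.2 ⟨T, fun n hn =>
        measure_mono (Set.biInter_subset_of_mem hn)⟩)) zero_le
    refine measure_mono_null (fun ω hω => ?_) (measure_iUnion_null hnull)
    obtain ⟨T, hT⟩ := eventually_atTop.1 (not_frequently.1 hω)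
    exact Set.mem_iUnion.2 ⟨T, Set.mem_iInter₂.2 fun n hn => (not_le.1 (hT n hn)).le⟩
  have hall : ∀ᵐ ω ∂μ, ∀ k : ℕ, ∃ᶠ n in atTop, f n ω ≤ c + 1 / (k + 1) :=
    ae_all_iff.2 fun k => hfreq _ Nat.one_div_pos_of_nat
  filter_upwards [hall] with ω hω
  refine le_of_forall_pos_lt_add fun ε hε => ?_
  obtain ⟨k, hk⟩ := exists_nat_one_div_lt hε
  exact (liminf_le_of_frequently_le (hω k) (hbdd ω)).trans_lt (by linarith)

def extendByFalse {n : ℕ} (w : Fin n → Bool) : ℕ → Bool :=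
  fun i => if h : i < n then w ⟨i, h⟩ else false

lemma card_forall_extendByFalse_eq_true {n : ℕ} {I : Finset ℕ} (hI : ∀ j ∈ I, j < n) :
    (#{w : Fin n → Bool | ∀ j ∈ I, extendByFalse w j = true} : ℝ) = 2 ^ n * (1 / 2) ^ #I := by
  have hpi : ({w : Fin n → Bool | ∀ j ∈ I, extendByFalse w j = true} : Finset _) =
      Fintype.piFinset fun i : Fin n => if (i : ℕ) ∈ I then {true} else univ := by
    ext w
    simp only [mem_filter, mem_univ, true_and, Fintype.mem_piFinset]
    constructor
    · intro h i
      split_ifs with hi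
      · simpa [extendByFalse] using h i hi
      · exact mem_univ _
    · intro h j hj
      simpa [extendByFalse, hI j hj, hj] using h ⟨j, hI j hj⟩
  have hrange : range n ∩ I = I := inter_eq_right.2 fun j hj => mem_range.2 (hI j hj)
  rw [hpi, Fintype.card_piFinset, Nat.cast_prod, Fin.prod_univ_eq_prod_range
    (fun i => ((#(if i ∈ I then {true} else univ : Finset Bool) : ℕ) : ℝ))]
  calc ∏ i ∈ range n, ((#(if i ∈ I then {true} else univ : Finset Bool) : ℕ) : ℝ)
      = ∏ i ∈ range n, (2 * if i ∈ I then 1 / 2 else 1) :=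
        prod_congr rfl fun i _ => by split_ifs <;> simp
    _ = 2 ^ n * (1 / 2) ^ #I := by
        rw [prod_mul_distrib, prod_ite_mem, hrange]
        simp

def IsFairCoin (μ : Measure (ℕ → Bool)) : Prop :=
  ∀ (n : ℕ) (v : ℕ → Bool), μ {b : ℕ → Bool | ∀ i, i < n → b i = v i} = (1 / 2 : ENNReal) ^ n

lemma IsFairCoin.measure_restrict_mem {μ : Measure (ℕ → Bool)} (hμ : IsFairCoin μ) (n : ℕ)
    (S : Finset (Fin n → Bool)) :
    μ {b | (fun i : Fin n => b i) ∈ S} = #S * (1 / 2 : ENNReal) ^ n := by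
  have hr : Measurable fun (b : ℕ → Bool) (i : Fin n) => b i := by fun_prop
  have hfiber (v : Fin n → Bool) : (fun (b : ℕ → Bool) (i : Fin n) => b i) ⁻¹' {v} =
      {b | ∀ i, i < n → b i = extendByFalse v i} := by
    ext b
    simp only [Set.mem_preimage, Set.mem_singleton_iff, funext_iff, Fin.forall_iff,
      Set.mem_ofPred_eq, extendByFalse]
    exact forall_congr' fun i => forall_congr' fun hi => by rw [dif_pos hi]
  calc μ {b | (fun i : Fin n => b i) ∈ S} = μ.map (fun b (i : Fin n) => b i) S :=
        (Measure.map_apply hr S.measurableSet).symm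
    _ = ∑ v ∈ S, (1 / 2 : ENNReal) ^ n := by
        rw [← sum_measure_singleton]
        exact sum_congr rfl fun v _ => by
          rw [Measure.map_apply hr (measurableSet_singleton v), hfiber, hμ]
    _ = #S * (1 / 2 : ENNReal) ^ n := by rw [sum_const, nsmul_eq_mul]

def runLength (b : ℕ → Bool) : ℕ → ℕ
  | 0 => 0
  | t + 1 => if b t then runLength b t + 1 else 0

lemma le_runLength_iff {b : ℕ → Bool} {k t : ℕ} :
    k ≤ runLength b t ↔ k ≤ t ∧ ∀ j ∈ Ico (t - k) t, b j = true := by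
  induction t generalizing k with
  | zero => simp [runLength]
  | succ t ih =>
    rcases k with _ | k
    · simp
    cases h : b t
    · simp only [runLength, h]
      refine ⟨by simp, fun ⟨_, hall⟩ => ?_⟩
      simpa [h] using hall t (by simp)
    · simp only [runLength, h, if_true, Nat.add_le_add_iff_right, ih, mem_Ico]
      constructor
      · rintro ⟨hk, hall⟩
        refine ⟨by omega, fun j hj => ?_⟩
        rcases (by omega : j < t ∨ j = t) with hjt | rfl
        · exact hall j (by omega)
        · exact h
      · rintro ⟨hk, hall⟩
        exact ⟨by omega, fun j hj => hall j (by omega)⟩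

lemma runLength_congr {b c : ℕ → Bool} {t : ℕ} (h : ∀ i < t, b i = c i) :
    runLength b t = runLength c t := by
  induction t with
  | zero => rfl
  | succ t ih => simp only [runLength, h t (by omega), ih fun i hi => h i (by omega)]

lemma autoRun_eq_min_runLength (m : ℕ) (b : ℕ → Bool) (t : ℕ) :
    autoRun (fun i z => if z then min (i + 1) m else 0) 0 b t = min (runLength b t) m := by
  induction t with
  | zero => simp [autoRun, runLength]
  | succ t ih =>
    rcases h : b t
    · simp [autoRun, runLength, h]
    · simp only [autoRun, runLength, h, ih, if_true]
      omega

def longRunCount (m : ℕ) (b : ℕ → Bool) (n : ℕ) : ℕ :=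
  #{t ∈ range n | m ≤ runLength b t}

lemma longRunCount_congr {m n : ℕ} {b c : ℕ → Bool} (h : ∀ i < n, b i = c i) :
    longRunCount m b n = longRunCount m c n := by
  unfold longRunCount
  congr 1
  exact filter_congr fun t ht => by
    rw [runLength_congr fun i hi => h i (hi.trans (mem_range.1 ht))]

lemma cars_autoRun_eq_longRunCount (m : ℕ) (b : ℕ → Bool) (n : ℕ) :
    cars (fun t => decide (autoRun (fun i z => if z then min (i + 1) m else 0) 0 b t = m)) n =
      longRunCount m b n := by
  unfold cars longRunCount
  congr 1
  exact filter_congr fun t _ => by simp [autoRun_eq_min_runLength]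

section Moments

variable {m n : ℕ}

def longRunSet (m n t : ℕ) : Finset (Fin n → Bool) :=
  {w | m ≤ runLength (extendByFalse w) t}

lemma card_longRunSet {t : ℕ} (hmt : m ≤ t) (htn : t ≤ n) :
    (#(longRunSet m n t) : ℝ) = 2 ^ n * (1 / 2) ^ m := by
  simp only [longRunSet, le_runLength_iff, hmt, true_and]
  rw [card_forall_extendByFalse_eq_true fun j hj => by simp only [mem_Ico] at hj; omega,
    Nat.card_Ico, Nat.sub_sub_self hmt]

lemma card_longRunSet_le {t : ℕ} (htn : t ≤ n) :
    (#(longRunSet m n t) : ℝ) ≤ 2 ^ n * (1 / 2) ^ m := by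
  by_cases hmt : m ≤ t
  · exact (card_longRunSet hmt htn).le
  · have : ∀ w : Fin n → Bool, ¬ m ≤ runLength (extendByFalse w) t := fun w h =>
      hmt (le_runLength_iff.1 h).1
    simp only [longRunSet, this, filter_false, card_empty, Nat.cast_zero]
    positivity

lemma card_longRunSet_inter_le_of_add_le {s t : ℕ} (hst : s + m ≤ t) (htn : t ≤ n) :
    (#(longRunSet m n s ∩ longRunSet m n t) : ℝ) ≤ 2 ^ n * ((1 / 2) ^ m) ^ 2 := by
  rw [longRunSet, longRunSet, ← filter_and]
  by_cases hms : m ≤ s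
  · have hdisj : Disjoint (Ico (s - m) s) (Ico (t - m) t) :=
      disjoint_left.2 fun j hj hj' => by simp only [mem_Ico] at hj hj'; omega
    have hcard : #(Ico (s - m) s ∪ Ico (t - m) t) = 2 * m := by
      rw [card_union_of_disjoint hdisj, Nat.card_Ico, Nat.card_Ico]; omega
    simp only [le_runLength_iff, hms, (by omega : m ≤ t), true_and, ← forall_mem_union]
    rw [card_forall_extendByFalse_eq_true fun j hj => by
      simp only [mem_union, mem_Ico] at hj; omega, hcard, pow_mul']
  · have : ∀ w : Fin n → Bool, ¬ m ≤ runLength (extendByFalse w) s := fun w h =>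
      hms (le_runLength_iff.1 h).1
    simp only [this, false_and, filter_false, card_empty, Nat.cast_zero]
    positivity

lemma card_longRunSet_inter_le {s t : ℕ} (hs : s ≤ n) (ht : t ≤ n) :
    (#(longRunSet m n s ∩ longRunSet m n t) : ℝ) ≤
      2 ^ n * ((1 / 2) ^ m) ^ 2 + if s < t + m ∧ t < s + m then 2 ^ n * (1 / 2) ^ m else 0 := by
  split_ifs with hnear
  · exact le_add_of_nonneg_of_le (by positivity)
      ((Nat.cast_le.2 (card_le_card inter_subset_left)).trans (card_longRunSet_le hs))
  · rw [add_zero]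
    rcases (by omega : s + m ≤ t ∨ t + m ≤ s) with hst | hts
    · exact card_longRunSet_inter_le_of_add_le hst ht
    · rw [inter_comm]
      exact card_longRunSet_inter_le_of_add_le hts hs

lemma longRunCount_extendByFalse (w : Fin n → Bool) :
    longRunCount m (extendByFalse w) n = #{t ∈ range n | w ∈ longRunSet m n t} := by
  simp [longRunCount, longRunSet]

lemma sum_longRunCount_eq :
    ∑ w : Fin n → Bool, longRunCount m (extendByFalse w) n =
      ∑ t ∈ range n, #(longRunSet m n t) := by
  simp only [longRunCount_extendByFalse]
  refine (sum_card_bipartiteAbove_eq_sum_card_bipartiteBelow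
    (fun w t => w ∈ longRunSet m n t)).trans ?_
  simp [bipartiteBelow]

lemma sum_longRunCount_sq_eq :
    ∑ w : Fin n → Bool, longRunCount m (extendByFalse w) n ^ 2 =
      ∑ s ∈ range n, ∑ t ∈ range n, #(longRunSet m n s ∩ longRunSet m n t) := by
  simp only [longRunCount_extendByFalse, sq, ← card_product, ← filter_product]
  rw [← sum_product' (f := fun s t => #(longRunSet m n s ∩ longRunSet m n t))]
  refine (sum_card_bipartiteAbove_eq_sum_card_bipartiteBelow
    (fun w (x : ℕ × ℕ) => w ∈ longRunSet m n x.1 ∧ w ∈ longRunSet m n x.2)).trans ?_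
  simp [bipartiteBelow, filter_and]

lemma sub_mul_le_sum_longRunCount :
    ((n : ℝ) - m) * (2 ^ n * (1 / 2) ^ m) ≤
      ∑ w : Fin n → Bool, (longRunCount m (extendByFalse w) n : ℝ) := by
  rw [← Nat.cast_sum, sum_longRunCount_eq, Nat.cast_sum]
  have hIco : ∑ t ∈ Ico m n, (#(longRunSet m n t) : ℝ) = (n - m : ℕ) * (2 ^ n * (1 / 2) ^ m) := by
    rw [sum_congr rfl fun t ht => card_longRunSet (mem_Ico.1 ht).1 (mem_Ico.1 ht).2.le,
      sum_const, Nat.card_Ico, nsmul_eq_mul]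
  have hsub : (n : ℝ) - m ≤ (n - m : ℕ) := by
    have : (n : ℝ) ≤ (n - m : ℕ) + m := by exact_mod_cast (by omega : n ≤ n - m + m)
    linarith
  calc ((n : ℝ) - m) * (2 ^ n * (1 / 2) ^ m) ≤ (n - m : ℕ) * (2 ^ n * (1 / 2) ^ m) := by
        gcongr
    _ ≤ _ := hIco ▸ sum_le_sum_of_subset_of_nonneg
        (fun t ht => mem_range.2 (mem_Ico.1 ht).2) fun _ _ _ => by positivity

lemma sum_longRunCount_sq_le :
    ∑ w : Fin n → Bool, (longRunCount m (extendByFalse w) n : ℝ) ^ 2 ≤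
      2 ^ n * ((n * (1 / 2) ^ m) ^ 2 + 2 * m * n * (1 / 2) ^ m) := by
  set p : ℝ := (1 / 2) ^ m
  have hnear (s : ℕ) : #{t ∈ range n | s < t + m ∧ t < s + m} ≤ 2 * m := by
    have hsub : {t ∈ range n | s < t + m ∧ t < s + m} ⊆ Ico (s + 1 - m) (s + m) := fun t ht => by
      simp only [mem_filter, mem_range] at ht
      exact mem_Ico.2 (by omega)
    have := card_le_card hsub
    rw [Nat.card_Ico] at this
    omega
  have hrow (s : ℕ) (hs : s < n) :
      ∑ t ∈ range n, (#(longRunSet m n s ∩ longRunSet m n t) : ℝ) ≤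
        n * (2 ^ n * p ^ 2) + 2 * m * (2 ^ n * p) := by
    refine (sum_le_sum fun t ht => card_longRunSet_inter_le hs.le (mem_range.1 ht).le).trans ?_
    rw [sum_add_distrib, sum_const, card_range, nsmul_eq_mul, ← sum_filter, sum_const,
      nsmul_eq_mul]
    gcongr
    exact_mod_cast hnear s
  have hsq : ∑ w : Fin n → Bool, (longRunCount m (extendByFalse w) n : ℝ) ^ 2 =
      ∑ s ∈ range n, ∑ t ∈ range n, (#(longRunSet m n s ∩ longRunSet m n t) : ℝ) := by
    exact_mod_cast sum_longRunCount_sq_eq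
  calc _ ≤ ∑ s ∈ range n, (n * (2 ^ n * p ^ 2) + 2 * m * (2 ^ n * p)) :=
        hsq ▸ sum_le_sum fun s hs => hrow s (mem_range.1 hs)
    _ = _ := by rw [sum_const, card_range, nsmul_eq_mul]; ring

lemma sum_longRunCount_sub_sq_le :
    ∑ w : Fin n → Bool, ((longRunCount m (extendByFalse w) n : ℝ) - n * (1 / 2) ^ m) ^ 2 ≤
      2 ^ n * (4 * m * n * (1 / 2 : ℝ) ^ m) := by
  set p : ℝ := (1 / 2) ^ m
  have hp1 : p ≤ 1 := pow_le_one₀ (by norm_num) (by norm_num)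
  have hexpand :
      ∑ w : Fin n → Bool, ((longRunCount m (extendByFalse w) n : ℝ) - n * p) ^ 2 =
        ∑ w : Fin n → Bool, (longRunCount m (extendByFalse w) n : ℝ) ^ 2 -
          2 * (n * p) * ∑ w : Fin n → Bool, (longRunCount m (extendByFalse w) n : ℝ) +
          2 ^ n * (n * p) ^ 2 := by
    simp only [sub_sq, sum_add_distrib, sum_sub_distrib, ← sum_mul, ← mul_sum, sum_const,
      card_univ, Fintype.card_fun, Fintype.card_bool, Fintype.card_fin, nsmul_eq_mul]
    push_cast
    ring
  have hmean := mul_le_mul_of_nonneg_left (sub_mul_le_sum_longRunCount (m := m) (n := n))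
    (by positivity : (0 : ℝ) ≤ 2 * (n * p))
  nlinarith [sum_longRunCount_sq_le (m := m) (n := n),
    mul_le_mul_of_nonneg_left hp1 (by positivity : (0 : ℝ) ≤ 2 ^ n * m * n * p)]

end Moments

lemma card_add_le_longRunCount_div_le {m n : ℕ} {δ : ℝ} (hδ : 0 < δ) (hn : 0 < n) :
    (#{w : Fin n → Bool | (1 / 2 : ℝ) ^ m + δ ≤ (longRunCount m (extendByFalse w) n : ℝ) / n} :
      ℝ) / 2 ^ n ≤ 4 * m * (1 / 2 : ℝ) ^ m / (δ ^ 2 * n) := by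
  have hn' : (0 : ℝ) < n := Nat.cast_pos.2 hn
  have hcheb := (card_filter_add_le_mul_sq_le univ
    (fun w : Fin n → Bool => (longRunCount m (extendByFalse w) n : ℝ))
    (c := n * (1 / 2 : ℝ) ^ m) (d := n * δ) (by positivity)).trans sum_longRunCount_sub_sq_le
  simp only [← mul_add, mul_comm (n : ℝ) (_ + δ), ← le_div_iff₀ hn'] at hcheb
  rw [div_le_div_iff₀ (by positivity) (by positivity)]
  refine le_of_mul_le_mul_right ?_ hn'
  nlinarith

lemma IsFairCoin.measure_add_le_longRunCount_div_le {μ : Measure (ℕ → Bool)}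
    (hμ : IsFairCoin μ) {m n : ℕ} {δ : ℝ} (hδ : 0 < δ) (hn : 0 < n) :
    μ {b | (1 / 2 : ℝ) ^ m + δ ≤ (longRunCount m b n : ℝ) / n} ≤
      ENNReal.ofReal (4 * m * (1 / 2 : ℝ) ^ m / (δ ^ 2 * n)) := by
  have hset : {b : ℕ → Bool | (1 / 2 : ℝ) ^ m + δ ≤ (longRunCount m b n : ℝ) / n} =
      {b | (fun i : Fin n => b i) ∈ ({w : Fin n → Bool |
        (1 / 2 : ℝ) ^ m + δ ≤ (longRunCount m (extendByFalse w) n : ℝ) / n} : Finset _)} := by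
    ext b
    simp only [Set.mem_ofPred_eq, mem_filter, mem_univ, true_and]
    rw [longRunCount_congr (c := extendByFalse fun i : Fin n => b i) fun i hi => by
      simp [extendByFalse, hi]]
  rw [hset, hμ.measure_restrict_mem,
    ENNReal.le_ofReal_iff_toReal_le (by simp [ENNReal.mul_eq_top]) (by positivity)]
  refine (le_of_eq ?_).trans (card_add_le_longRunCount_div_le hδ hn)
  simp [ENNReal.toReal_mul, div_eq_mul_inv]

lemma IsFairCoin.tendsto_measure_add_le_longRunCount_div {μ : Measure (ℕ → Bool)}
    (hμ : IsFairCoin μ) (m : ℕ) {δ : ℝ} (hδ : 0 < δ) :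
    Tendsto (fun n => μ {b | (1 / 2 : ℝ) ^ m + δ ≤ (longRunCount m b n : ℝ) / n}) atTop
      (𝓝 0) := by
  have hbound : Tendsto (fun n : ℕ => ENNReal.ofReal (4 * m * (1 / 2 : ℝ) ^ m / δ ^ 2 / n))
      atTop (𝓝 0) := by
    simpa using ENNReal.tendsto_ofReal (tendsto_const_div_atTop_nhds_zero_nat _)
  refine tendsto_of_tendsto_of_tendsto_of_le_of_le' tendsto_const_nhds hbound
    (Eventually.of_forall fun _ => zero_le) ?_
  filter_upwards [eventually_gt_atTop 0] with n hn
  rw [div_div]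
  exact hμ.measure_add_le_longRunCount_div_le hδ hn

/-- States `{1, …, ℓ}` are encoded as `{0, …, ℓ-1}`; the hypothesis `hμ` pins down the
uniform product measure through its values on cylinders. -/
theorem counting_automaton_almost_surely_sparse_general (ℓ : ℕ)
    (μ : Measure (ℕ → Bool))
    (hμ : ∀ (n : ℕ) (v : ℕ → Bool),
      μ {b : ℕ → Bool | ∀ i, i < n → b i = v i} = (1 / 2 : ENNReal) ^ n) :
    ∀ᵐ b ∂μ, epsWeaklySparse ((1 / 2 : ℝ) ^ (ℓ - 1))
      (fun t => decide
        (autoRun (fun i z => if z then min (i + 1) (ℓ - 1) else 0) 0 b t = ℓ - 1)) := by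
  have hbdd (b : ℕ → Bool) :
      IsBoundedUnder (· ≥ ·) atTop fun n => (longRunCount (ℓ - 1) b n : ℝ) / n :=
    isBoundedUnder_of ⟨0, fun n => by positivity⟩
  have hsparse := ae_liminf_le_of_tendsto_measure hbdd fun δ hδ =>
    IsFairCoin.tendsto_measure_add_le_longRunCount_div hμ (ℓ - 1) hδ
  simpa only [epsWeaklySparse, cars_autoRun_eq_longRunCount] using hsparse

/-- Consider the `ℓ`-state automaton with states `{1, …, ℓ}` (encoded here as
`{0, …, ℓ-1}`, state `i` of the paper being `i - 1`), start state `1`, transitions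
`Δ(i, 1) = min(i+1, ℓ)` and `Δ(i, 0) = 1`, and `B = {ℓ}`.  If `μ` is the uniform product
(coin-flipping) measure on `{0,1}^ω` — characterized by giving each cylinder on the
first `n` coordinates measure `2^{-n}` — then for `μ`-almost every `b`, the
characteristic sequence of `V_B(b)` is `2^{-ℓ+1}`-weakly sparse. -/
theorem counting_automaton_almost_surely_sparse (ℓ : ℕ) (hℓ : 1 ≤ ℓ)
    (μ : Measure (ℕ → Bool)) [IsProbabilityMeasure μ]
    (hμ : ∀ (n : ℕ) (v : ℕ → Bool),
      μ {b : ℕ → Bool | ∀ i, i < n → b i = v i} = (1 / 2 : ENNReal) ^ n) :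
    ∀ᵐ b ∂μ, epsWeaklySparse ((1 / 2 : ℝ) ^ (ℓ - 1))
      (fun t => decide
        (autoRun (fun i z => if z then min (i + 1) (ℓ - 1) else 0) 0 b t = ℓ - 1)) :=
  counting_automaton_almost_surely_sparse_general ℓ μ hμ
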